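/- For every d ∈ ℕ and every index i with 1 ≤ i ≤ 2^d, there exists a binary temporal partition Q ∈ 𝒞_d with |Q| ≤ d + 1 such that i is the left endpoint of some segment of Q (i.e., i = 1 or i ∈ C(Q)). -/

import Mathlib

/-- The set `𝒞_d(t)` of binary temporal partitions starting at `t`, represented as
finsets of segments `(a,b)` (each segment identified with the interval `{a,…,b}`). -/
def Cpt : ℕ → ℕ → Finset (Finset (ℕ × ℕ))
  | 0, t => {{(t, t)}}
  | d + 1, t =>
      insert {(t, t + 2 ^ (d + 1) - 1)}
        ((Cpt d t ×ˢ Cpt d (t + 2 ^ d)).image fun p => p.1 ∪ p.2)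

/-- `C(Q)`: the set of change points of `Q`, i.e. the left endpoints of its segments
other than `1`. -/
def changePts (Q : Finset (ℕ × ℕ)) : Finset ℕ :=
  (Q.image Prod.fst).erase 1

/-! Splitting the block `[t, t + 2^(d+1))` into halves and keeping the half not containing `i`
as a single segment adds one segment per level, so induction on `d` yields a partition with
at most `d + 1` segments having `i` as a left endpoint. -/

theorem singleton_mem_Cpt (d t : ℕ) : {(t, t + 2 ^ d - 1)} ∈ Cpt d t := by
  cases d <;> simp [Cpt]

theorem union_mem_Cpt_succ {d t : ℕ} {Q₁ Q₂ : Finset (ℕ × ℕ)} (h₁ : Q₁ ∈ Cpt d t)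
    (h₂ : Q₂ ∈ Cpt d (t + 2 ^ d)) : Q₁ ∪ Q₂ ∈ Cpt (d + 1) t := by
  rw [Cpt]
  exact Finset.mem_insert_of_mem (Finset.mem_image.mpr ⟨(Q₁, Q₂), Finset.mem_product.mpr ⟨h₁, h₂⟩, rfl⟩)

theorem exists_mem_Cpt_card_le_of_mem_Ico (d : ℕ) {t i : ℕ} (hti : t ≤ i) (hit : i < t + 2 ^ d) :
    ∃ Q ∈ Cpt d t, Q.card ≤ d + 1 ∧ i ∈ Q.image Prod.fst := by
  induction d generalizing t with
  | zero =>
    obtain rfl : i = t := by omega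
    exact ⟨{(i, i)}, by simp [Cpt], by simp, by simp⟩
  | succ d ih =>
    rw [pow_succ, mul_two] at hit
    by_cases hleft : i < t + 2 ^ d
    · obtain ⟨Q, hQ, hcard, hi⟩ := ih hti hleft
      refine ⟨Q ∪ {(t + 2 ^ d, t + 2 ^ d + 2 ^ d - 1)},
        union_mem_Cpt_succ hQ (singleton_mem_Cpt d _), ?_, ?_⟩
      · exact (Finset.card_union_le _ _).trans (by rw [Finset.card_singleton]; omega)
      · simp only [Finset.image_union]
        exact Finset.mem_union_left _ hi
    · obtain ⟨Q, hQ, hcard, hi⟩ := ih (t := t + 2 ^ d) (by omega) (by omega)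
      refine ⟨{(t, t + 2 ^ d - 1)} ∪ Q, union_mem_Cpt_succ (singleton_mem_Cpt d t) hQ, ?_, ?_⟩
      · exact (Finset.card_union_le _ _).trans (by rw [Finset.card_singleton]; omega)
      · simp only [Finset.image_union]
        exact Finset.mem_union_right _ hi

/-- For every `d ∈ ℕ` and every index `i` with `1 ≤ i ≤ 2^d`, there
exists a binary temporal partition `Q ∈ 𝒞_d` with `|Q| ≤ d + 1` such that `i` is the
left endpoint of some segment of `Q` (i.e. `i = 1` or `i ∈ C(Q)`). -/
theorem small_partition_with_left_endpoint (d i : ℕ) (hi1 : 1 ≤ i) (hi2 : i ≤ 2 ^ d) :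
    ∃ Q ∈ Cpt d 1, Q.card ≤ d + 1 ∧ (i = 1 ∨ i ∈ changePts Q) := by
  obtain ⟨Q, hQ, hcard, hi⟩ := exists_mem_Cpt_card_le_of_mem_Ico d hi1 (by omega)
  refine ⟨Q, hQ, hcard, ?_⟩
  by_cases h : i = 1
  · exact Or.inl h
  · exact Or.inr (Finset.mem_erase.mpr ⟨h, hi⟩)
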